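/- arXiv:2303.10520 — 3 statements merged into one kernel-verified Lean document; each statement's English description precedes it below -/
import Mathlib

section
/- Let X, Y be locally convex Hausdorff topological vector spaces and F : X ⇒ Y a polyhedral convex multifunction, i.e., gph F = {(x,y) : ⟨x_i*, x⟩ + ⟨y_i*, y⟩ ≤ β_i, i = 1,…,m} for some x_i* ∈ X*, y_i* ∈ Y*, β_i ∈ ℝ. Then dom F is a polyhedral convex set in X and rge F is a polyhedral convex set in Y. -/
/-- A set is polyhedral convex if it is a finite intersection of half-spaces
given by continuous linear functionals. -/
def IsPolyhedralConvex {E : Type*} [AddCommGroup E] [Module ℝ E] [TopologicalSpace E]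
    (D : Set E) : Prop :=
  ∃ (n : ℕ) (f : Fin n → E →L[ℝ] ℝ) (α : Fin n → ℝ),
    D = {x | ∀ i, f i x ≤ α i}

/-!
Fourier–Motzkin elimination: a real variable `s` can be eliminated from a finite system
`c i * s ≤ b i` by keeping the inequalities with `c i = 0` and adding, for every pair with
`c i > 0 > c j`, the combination `c j * b i ≤ c i * b j`. Hence sweeping a polyhedral set along a
line, and then along a finite-dimensional subspace, keeps it polyhedral. The projection of a
polyhedral graph onto `X` is such a sweep even when `Y` is infinite-dimensional: membership of
`(x, y)` depends on `y` only through `(f i (0, y))ᵢ ∈ ℝᵐ`, so `Y` may be replaced by the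
finite-dimensional range of that map. The range of `F` is the domain of its inverse.
-/

open Pointwise

theorem Finset.exists_between_of_forall_le {L U : Finset ℝ} (h : ∀ l ∈ L, ∀ u ∈ U, l ≤ u) :
    ∃ s, (∀ l ∈ L, l ≤ s) ∧ ∀ u ∈ U, s ≤ u := by
  rcases L.eq_empty_or_nonempty with rfl | hL
  · obtain ⟨s, hs⟩ := U.bddBelow
    exact ⟨s, by simp, fun u hu => hs hu⟩
  · exact ⟨L.max' hL, fun l hl => L.le_max' l hl, fun u hu => L.max'_le hL _ fun l hl => h l hl u hu⟩

theorem exists_forall_mul_le_iff {ι : Type*} [Finite ι] (b c : ι → ℝ) :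
    (∃ s, ∀ i, c i * s ≤ b i) ↔
      (∀ i, c i = 0 → 0 ≤ b i) ∧ ∀ i j, 0 < c i → c j < 0 → c j * b i ≤ c i * b j := by
  constructor
  · rintro ⟨s, hs⟩
    refine ⟨fun i hi => by simpa [hi] using hs i, fun i j hi hj => ?_⟩
    nlinarith [hs i, hs j]
  · rintro ⟨hzero, hpair⟩
    classical
    have := Fintype.ofFinite ι
    obtain ⟨s, hlow, hup⟩ := Finset.exists_between_of_forall_le
      (L := (Finset.univ.filter (c · < 0)).image fun j => b j / c j)
      (U := (Finset.univ.filter (0 < c ·)).image fun i => b i / c i) (by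
        simp only [Finset.mem_image, Finset.mem_filter, Finset.mem_univ, true_and]
        rintro _ ⟨j, hj, rfl⟩ _ ⟨i, hi, rfl⟩
        rw [div_le_iff_of_neg hj, div_mul_eq_mul_div, div_le_iff₀ hi]
        linarith [hpair i j hi hj])
    refine ⟨s, fun i => ?_⟩
    rcases lt_trichotomy (c i) 0 with hi | hi | hi
    · have := hlow _ (Finset.mem_image_of_mem _ (Finset.mem_filter.2 ⟨Finset.mem_univ _, hi⟩))
      rwa [div_le_iff_of_neg hi, mul_comm] at this
    · simpa [hi] using hzero i hi
    · have := hup _ (Finset.mem_image_of_mem _ (Finset.mem_filter.2 ⟨Finset.mem_univ _, hi⟩))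
      rwa [le_div_iff₀ hi, mul_comm] at this

namespace IsPolyhedralConvex

variable {E F : Type*} [AddCommGroup E] [Module ℝ E] [TopologicalSpace E]
  [AddCommGroup F] [Module ℝ F] [TopologicalSpace F]

theorem of_finite {ι : Type*} [Finite ι] (f : ι → E →L[ℝ] ℝ) (α : ι → ℝ) :
    IsPolyhedralConvex {x | ∀ i, f i x ≤ α i} := by
  let e := Finite.equivFin ι
  refine ⟨Nat.card ι, f ∘ e.symm, α ∘ e.symm, ?_⟩
  ext x
  simp only [Set.mem_ofPred_eq, Function.comp_apply]
  exact ⟨fun h i => h _, fun h i => by simpa using h (e i)⟩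

theorem halfspace (f : E →L[ℝ] ℝ) (α : ℝ) : IsPolyhedralConvex {x | f x ≤ α} := by
  simpa using of_finite (fun _ : Unit => f) fun _ => α

theorem univ : IsPolyhedralConvex (Set.univ : Set E) := by
  simpa using of_finite (fun i : Empty => i.elim) fun i => i.elim

theorem iInter {ι : Type*} [Finite ι] {s : ι → Set E} (hs : ∀ i, IsPolyhedralConvex (s i)) :
    IsPolyhedralConvex (⋂ i, s i) := by
  choose n f α hfα using hs
  convert of_finite (fun p : Σ i, Fin (n i) => f p.1 p.2) fun p => α p.1 p.2 using 1
  ext x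
  simp [hfα, Sigma.forall]

theorem inter {s t : Set E} (hs : IsPolyhedralConvex s) (ht : IsPolyhedralConvex t) :
    IsPolyhedralConvex (s ∩ t) := by
  rw [Set.inter_eq_iInter]
  exact iInter fun b => by cases b <;> assumption

theorem imp {s : Set E} (hs : IsPolyhedralConvex s) (p : Prop) :
    IsPolyhedralConvex {x | p → x ∈ s} := by
  by_cases hp : p
  · simpa [hp] using hs
  · simpa [hp] using univ

theorem preimage {D : Set F} (hD : IsPolyhedralConvex D) (L : E →L[ℝ] F) :
    IsPolyhedralConvex (L ⁻¹' D) := by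
  obtain ⟨n, f, α, rfl⟩ := hD
  exact ⟨n, fun i => (f i).comp L, α, rfl⟩

theorem add_span_singleton {S : Set E} (hS : IsPolyhedralConvex S) (v : E) :
    IsPolyhedralConvex (S + (ℝ ∙ v : Set E)) := by
  obtain ⟨n, f, α, rfl⟩ := hS
  have hsweep : {x | ∀ i, f i x ≤ α i} + (ℝ ∙ v : Set E) =
      {x | ∃ a : ℝ, ∀ i, f i v * a ≤ α i - f i x} := by
    ext x
    simp only [Set.mem_add, SetLike.mem_coe, Submodule.mem_span_singleton, Set.mem_ofPred_eq]
    constructor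
    · rintro ⟨p, hp, _, ⟨a, rfl⟩, rfl⟩
      exact ⟨-a, fun i => by simp only [map_add, map_smul, smul_eq_mul]; linarith [hp i]⟩
    · rintro ⟨a, ha⟩
      refine ⟨x + a • v, fun i => ?_, -a • v, ⟨-a, rfl⟩, by simp⟩
      simp only [map_add, map_smul, smul_eq_mul]
      linarith [ha i]
  rw [hsweep]
  convert inter (iInter fun i => (halfspace (f i) (α i)).imp (f i v = 0))
    (iInter fun i => iInter fun j =>
      ((halfspace (f i v • f j - f j v • f i) (f i v * α j - f j v * α i)).imp (f j v < 0)).imp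
        (0 < f i v)) using 1
  ext x
  simp only [exists_forall_mul_le_iff, Set.mem_inter_iff, Set.mem_iInter, Set.mem_ofPred_eq,
    sub_nonneg, sub_apply, smul_apply, smul_eq_mul]
  refine and_congr Iff.rfl (forall₂_congr fun i j => imp_congr_right fun _ => imp_congr_right
    fun _ => ?_)
  constructor <;> intro h <;> linarith

theorem add_submodule {S : Set E} (hS : IsPolyhedralConvex S) {W : Submodule ℝ E} (hW : W.FG) :
    IsPolyhedralConvex (S + (W : Set E)) := by
  classical
  obtain ⟨T, rfl⟩ := hW
  induction T using Finset.induction_on with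
  | empty => simpa using hS
  | insert v T _ ih =>
    rw [Finset.coe_insert, Submodule.span_insert, Submodule.coe_sup, add_comm (ℝ ∙ v : Set E),
      ← add_assoc]
    exact ih.add_span_singleton v

theorem image_fst_of_finiteDimensional {V : Type*} [AddCommGroup V] [Module ℝ V]
    [TopologicalSpace V] [FiniteDimensional ℝ V] {S : Set (E × V)} (hS : IsPolyhedralConvex S) :
    IsPolyhedralConvex (Prod.fst '' S) := by
  have hproj : Prod.fst '' S = ContinuousLinearMap.inl ℝ E V ⁻¹'
      (S + ((⊥ : Submodule ℝ E).prod (⊤ : Submodule ℝ V) : Set (E × V))) := by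
    ext x
    simp only [Set.mem_image, Prod.exists, exists_and_right, exists_eq_right, Submodule.prod_coe,
      Submodule.bot_coe, Submodule.top_coe, Set.mem_preimage, ContinuousLinearMap.inl_apply,
      Set.mem_add, Set.mem_prod, Set.mem_singleton_iff, Set.mem_univ, and_true, exists_and_left,
      exists_eq_left, Prod.mk_add_mk, add_zero, Prod.mk.injEq, add_eq_zero_iff_eq_neg,
      ↓existsAndEq]
    exact neg_surjective.exists
  rw [hproj]
  exact (hS.add_submodule (Submodule.fg_bot.prod Module.Finite.fg_top)).preimage _

theorem image_fst {G : Set (E × F)} (hG : IsPolyhedralConvex G) :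
    IsPolyhedralConvex (Prod.fst '' G) := by
  obtain ⟨m, f, α, rfl⟩ := hG
  let T : F →ₗ[ℝ] Fin m → ℝ :=
    LinearMap.pi fun i => ((f i).comp (ContinuousLinearMap.inr ℝ E F) : F →ₗ[ℝ] ℝ)
  have hsplit : ∀ i x y, f i (x, y) = f i (x, 0) + T y i := fun i x y => by
    simp [T, ← map_add]
  let W := LinearMap.range T
  have hS : IsPolyhedralConvex {p : E × W | ∀ i, f i (p.1, 0) + (p.2 : Fin m → ℝ) i ≤ α i} :=
    of_finite (fun i => (f i).comp ((ContinuousLinearMap.inl ℝ E F).comp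
      (ContinuousLinearMap.fst ℝ E W)) + (ContinuousLinearMap.proj i).comp
        (W.subtypeL.comp (ContinuousLinearMap.snd ℝ E W))) α
  convert hS.image_fst_of_finiteDimensional using 1
  ext x
  simp only [Set.mem_image, Prod.exists, exists_and_right, exists_eq_right, Set.mem_ofPred_eq]
  constructor
  · rintro ⟨y, hy⟩
    exact ⟨⟨T y, y, rfl⟩, fun i => by rw [← hsplit]; exact hy i⟩
  · rintro ⟨⟨_, y, rfl⟩, hy⟩
    exact ⟨y, fun i => by rw [hsplit]; exact hy i⟩

theorem image_snd {G : Set (E × F)} (hG : IsPolyhedralConvex G) :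
    IsPolyhedralConvex (Prod.snd '' G) := by
  convert (hG.preimage (ContinuousLinearEquiv.prodComm ℝ F E : F × E →L[ℝ] E × F)).image_fst
    using 1
  ext y
  simp

end IsPolyhedralConvex

theorem dom_rge_polyhedral_general
    {X Y : Type*}
    [AddCommGroup X] [Module ℝ X] [TopologicalSpace X]
    [AddCommGroup Y] [Module ℝ Y] [TopologicalSpace Y]
    (G : Set (X × Y)) (hG : IsPolyhedralConvex G) :
    IsPolyhedralConvex {x : X | ∃ y : Y, (x, y) ∈ G} ∧ IsPolyhedralConvex {y : Y | ∃ x : X, (x, y) ∈ G} := by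
  have hdom : Prod.fst '' G = {x | ∃ y, (x, y) ∈ G} := by ext; simp
  have hrge : Prod.snd '' G = {y | ∃ x, (x, y) ∈ G} := by ext; simp
  exact ⟨hdom ▸ hG.image_fst, hrge ▸ hG.image_snd⟩

/-- If `F : X ⇒ Y` is a polyhedral convex multifunction, then
`dom F` and `rge F` are polyhedral convex sets. -/
theorem dom_rge_polyhedral
    {X Y : Type*}
    [AddCommGroup X] [Module ℝ X] [TopologicalSpace X] [IsTopologicalAddGroup X]
    [ContinuousSMul ℝ X] [LocallyConvexSpace ℝ X] [T2Space X]
    [AddCommGroup Y] [Module ℝ Y] [TopologicalSpace Y] [IsTopologicalAddGroup Y]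
    [ContinuousSMul ℝ Y] [LocallyConvexSpace ℝ Y] [T2Space Y]
    (G : Set (X × Y)) (hG : IsPolyhedralConvex G) :
    IsPolyhedralConvex {x : X | ∃ y : Y, (x, y) ∈ G} ∧ IsPolyhedralConvex {y : Y | ∃ x : X, (x, y) ∈ G} :=
  dom_rge_polyhedral_general G hG
end

section
/- Let X and Y be locally convex Hausdorff topological vector spaces and F₁, F₂ : X ⇒ Y polyhedral convex multifunctions. Then the sum F₁ + F₂, defined by (F₁+F₂)(x) = F₁(x) + F₂(x) = {y₁ + y₂ : y₁ ∈ F₁(x), y₂ ∈ F₂(x)}, is a polyhedral convex multifunction. -/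
open ContinuousLinearMap

theorem exists_forall_add_mul_le_iff {ι : Type*} [Finite ι] (a b c : ι → ℝ) :
    (∃ t : ℝ, ∀ i, a i + t * c i ≤ b i) ↔
      (∀ i, c i = 0 → a i ≤ b i) ∧
        ∀ i j, 0 < c i → c j < 0 → c i * a j - c j * a i ≤ c i * b j - c j * b i := by
  constructor
  · rintro ⟨t, ht⟩
    refine ⟨fun i hi => by simpa [hi] using ht i, fun i j hi hj => ?_⟩
    nlinarith [mul_nonneg hi.le (sub_nonneg.2 (ht j)),
      mul_nonneg (neg_nonneg.2 hj.le) (sub_nonneg.2 (ht i))]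
  rintro ⟨hzero, hpair⟩
  by_cases hneg : ∃ j, c j < 0
  · -- the largest of the lower bounds `(b j - a j) / c j` satisfies every constraint
    obtain ⟨j₀, hj₀, hmax⟩ := Set.exists_max_image {j | c j < 0} (fun j => (b j - a j) / c j)
      (Set.toFinite _) hneg
    refine ⟨(b j₀ - a j₀) / c j₀, fun i => ?_⟩
    rcases lt_trichotomy (c i) 0 with hi | hi | hi
    · linarith [(div_le_iff_of_neg hi).1 (hmax i hi)]
    · simpa [hi] using hzero i hi
    · have ht : (b j₀ - a j₀) / c j₀ * c j₀ = b j₀ - a j₀ := div_mul_cancel₀ _ hj₀.ne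
      by_contra! h
      nlinarith [hpair i j₀ hi hj₀, mul_lt_mul_of_neg_left h hj₀]
  · push Not at hneg
    obtain ⟨t, ht⟩ := Finite.exists_ge fun i => (b i - a i) / c i
    refine ⟨t, fun i => ?_⟩
    rcases (hneg i).eq_or_lt with hi | hi
    · simpa [← hi] using hzero i hi.symm
    · linarith [(le_div_iff₀ hi).1 (ht i)]

section

variable {E : Type*} [AddCommGroup E] [Module ℝ E] [TopologicalSpace E]

theorem isPolyhedralConvex_setOf_forall_le {ι : Type*} [Finite ι] (f : ι → E →L[ℝ] ℝ)
    (α : ι → ℝ) : IsPolyhedralConvex {x | ∀ i, f i x ≤ α i} := by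
  obtain ⟨n, ⟨e⟩⟩ := Finite.exists_equiv_fin ι
  exact ⟨n, f ∘ e.symm, α ∘ e.symm, by ext x; simp [e.symm.forall_congr_left]⟩

theorem IsPolyhedralConvex.inter_s13 {S T : Set E} (hS : IsPolyhedralConvex S)
    (hT : IsPolyhedralConvex T) : IsPolyhedralConvex (S ∩ T) := by
  obtain ⟨n, f, α, rfl⟩ := hS
  obtain ⟨m, g, β, rfl⟩ := hT
  convert isPolyhedralConvex_setOf_forall_le (Sum.elim f g) (Sum.elim α β) using 1
  ext x
  simp [Sum.forall]

theorem IsPolyhedralConvex.preimage_s13 {F : Type*} [AddCommGroup F] [Module ℝ F]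
    [TopologicalSpace F] {S : Set F} (hS : IsPolyhedralConvex S) (L : E →L[ℝ] F) :
    IsPolyhedralConvex (L ⁻¹' S) := by
  obtain ⟨n, f, α, rfl⟩ := hS
  exact ⟨n, fun i => f i ∘L L, α, rfl⟩

theorem Submodule.isPolyhedralConvex [IsTopologicalAddGroup E] [ContinuousSMul ℝ E]
    [T2Space E] [FiniteDimensional ℝ E] (L : Submodule ℝ E) :
    IsPolyhedralConvex (L : Set E) := by
  let b := Module.finBasis ℝ (E ⧸ L)
  let g : Fin (Module.finrank ℝ (E ⧸ L)) → E →L[ℝ] ℝ :=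
    fun k => LinearMap.toContinuousLinearMap (b.coord k ∘ₗ L.mkQ)
  convert (isPolyhedralConvex_setOf_forall_le g 0).inter_s13
    (isPolyhedralConvex_setOf_forall_le (fun k => -g k) 0) using 1
  ext x
  simp only [SetLike.mem_coe, Set.mem_inter_iff, Set.mem_ofPred_eq, ← forall_and]
  rw [← Submodule.Quotient.mk_eq_zero, ← b.forall_coord_eq_zero_iff]
  simp [g, le_antisymm_iff]

theorem IsPolyhedralConvex.image_fst_of_real {S : Set (E × ℝ)} (hS : IsPolyhedralConvex S) :
    IsPolyhedralConvex (Prod.fst '' S) := by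
  obtain ⟨n, f, α, rfl⟩ := hS
  let g i := f i ∘L inl ℝ E ℝ
  let c i := f i (0, 1)
  have hf i e t : f i (e, t) = g i e + t * c i := by
    have h : (e, t) = inl ℝ E ℝ e + t • ((0 : E), (1 : ℝ)) := by simp
    rw [h, map_add, map_smul, smul_eq_mul, mul_comm]
    rfl
  convert (isPolyhedralConvex_setOf_forall_le (ι := {i // c i = 0}) (fun i => g i)
      (fun i => α i)).inter_s13
    (isPolyhedralConvex_setOf_forall_le (ι := {p : Fin n × Fin n // 0 < c p.1 ∧ c p.2 < 0})
      (fun p => c p.1.1 • g p.1.2 - c p.1.2 • g p.1.1)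
      (fun p => c p.1.1 * α p.1.2 - c p.1.2 * α p.1.1)) using 1
  ext e
  simp [hf, exists_forall_add_mul_le_iff]

theorem IsPolyhedralConvex.image_fst_of_pi_fin {m : ℕ} {S : Set (E × (Fin m → ℝ))} (hS : IsPolyhedralConvex S) :
    IsPolyhedralConvex (Prod.fst '' S) := by
  induction m generalizing E with
  | zero =>
    convert hS.preimage_s13 ((ContinuousLinearMap.id ℝ E).prod 0) using 1
    ext e
    exact ⟨fun ⟨⟨_, v⟩, hv, he⟩ => he ▸ Subsingleton.elim v 0 ▸ hv, fun h => ⟨_, h, rfl⟩⟩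
  | succ m ih =>
    let ψ : (E × (Fin m → ℝ)) × ℝ →L[ℝ] E × (Fin (m + 1) → ℝ) :=
      (fst ℝ E _ ∘L fst ℝ _ ℝ).prod ((snd ℝ _ ℝ).finCons (snd ℝ E _ ∘L fst ℝ _ ℝ))
    convert ih (hS.preimage_s13 ψ).image_fst_of_real using 1
    ext e
    constructor
    · rintro ⟨⟨e, v⟩, hv, rfl⟩
      have hv' : (e, Fin.cons (v 0) (Fin.tail v)) ∈ S := by rwa [Fin.cons_self_tail]
      exact ⟨(e, Fin.tail v), ⟨((e, Fin.tail v), v 0), hv', rfl⟩, rfl⟩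
    · rintro ⟨_, ⟨⟨⟨e, w⟩, t⟩, hw, rfl⟩, rfl⟩
      exact ⟨ψ ((e, w), t), hw, rfl⟩

theorem IsPolyhedralConvex.image_fst_s13 {F : Type*} [AddCommGroup F] [Module ℝ F]
    [TopologicalSpace F] {S : Set (E × F)} (hS : IsPolyhedralConvex S) : IsPolyhedralConvex (Prod.fst '' S) := by
  obtain ⟨n, f, α, rfl⟩ := hS
  let A : F →L[ℝ] (Fin n → ℝ) := pi fun i => f i ∘L inr ℝ E F
  have hf i e w : f i (e, w) = f i (e, 0) + A w i := by
    simpa [A] using ((f i).comp_inl_add_comp_inr (e, w)).symm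
  let g i : E × (Fin n → ℝ) →L[ℝ] ℝ :=
    f i ∘L inl ℝ E F ∘L fst ℝ E (Fin n → ℝ) + proj i ∘L snd ℝ E (Fin n → ℝ)
  let S' : Set (E × (Fin n → ℝ)) :=
    {q | ∀ i, g i q ≤ α i} ∩ snd ℝ E _ ⁻¹' LinearMap.range (A : F →ₗ[ℝ] Fin n → ℝ)
  have hS' : IsPolyhedralConvex S' :=
    (isPolyhedralConvex_setOf_forall_le _ α).inter_s13
      ((LinearMap.range (A : F →ₗ[ℝ] Fin n → ℝ)).isPolyhedralConvex.preimage_s13 (snd ℝ E _))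
  convert hS'.image_fst_of_pi_fin using 1
  ext e
  constructor
  · rintro ⟨⟨e, w⟩, hw, rfl⟩
    exact ⟨(e, A w), ⟨fun i => by simpa [g, hf i e w] using hw i, w, rfl⟩, rfl⟩
  · rintro ⟨⟨e, _⟩, ⟨hv, w, rfl⟩, rfl⟩
    exact ⟨(e, w), fun i => by simpa [g, hf i e w] using hv i, rfl⟩

end

theorem sum_of_polyhedral_multifunctions_general
    {X Y : Type*}
    [AddCommGroup X] [Module ℝ X] [TopologicalSpace X]
    [AddCommGroup Y] [Module ℝ Y] [TopologicalSpace Y] [IsTopologicalAddGroup Y]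
    (G₁ G₂ : Set (X × Y)) (hG₁ : IsPolyhedralConvex G₁) (hG₂ : IsPolyhedralConvex G₂) :
    IsPolyhedralConvex {p : X × Y |
      ∃ y₁ y₂ : Y, (p.1, y₁) ∈ G₁ ∧ (p.1, y₂) ∈ G₂ ∧ p.2 = y₁ + y₂} := by
  let L₁ : (X × Y) × Y →L[ℝ] X × Y := (fst ℝ X Y ∘L fst ℝ _ Y).prod (snd ℝ _ Y)
  let L₂ : (X × Y) × Y →L[ℝ] X × Y :=
    (fst ℝ X Y ∘L fst ℝ _ Y).prod (snd ℝ X Y ∘L fst ℝ _ Y - snd ℝ _ Y)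
  convert ((hG₁.preimage_s13 L₁).inter_s13 (hG₂.preimage_s13 L₂)).image_fst_s13 using 1
  ext ⟨x, y⟩
  constructor
  · rintro ⟨y₁, y₂, h₁, h₂, rfl⟩
    exact ⟨((x, y₁ + y₂), y₁), ⟨h₁, by simpa [L₂] using h₂⟩, rfl⟩
  · rintro ⟨⟨_, y₁⟩, ⟨h₁, h₂⟩, rfl⟩
    exact ⟨y₁, _, h₁, h₂, by simp⟩

/-- The sum of two polyhedral convex multifunctions is a
polyhedral convex multifunction. -/
theorem sum_of_polyhedral_multifunctions
    {X Y : Type*}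
    [AddCommGroup X] [Module ℝ X] [TopologicalSpace X] [IsTopologicalAddGroup X]
    [ContinuousSMul ℝ X] [LocallyConvexSpace ℝ X] [T2Space X]
    [AddCommGroup Y] [Module ℝ Y] [TopologicalSpace Y] [IsTopologicalAddGroup Y]
    [ContinuousSMul ℝ Y] [LocallyConvexSpace ℝ Y] [T2Space Y]
    (G₁ G₂ : Set (X × Y)) (hG₁ : IsPolyhedralConvex G₁) (hG₂ : IsPolyhedralConvex G₂) :
    IsPolyhedralConvex {p : X × Y |
      ∃ y₁ y₂ : Y, (p.1, y₁) ∈ G₁ ∧ (p.1, y₂) ∈ G₂ ∧ p.2 = y₁ + y₂} :=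
  sum_of_polyhedral_multifunctions_general G₁ G₂ hG₁ hG₂
end

section
/- Let φ : X × Y → ℝ ∪ {±∞} be a proper generalized polyhedral convex function and F : X ⇒ Y a generalized polyhedral convex multifunction. Define μ(x) = inf{φ(x,y) : y ∈ F(x)} (with inf ∅ = +∞). For any x ∈ X, if μ(x) is finite, then the set M(x) = {y ∈ F(x) : φ(x,y) = μ(x)} is nonempty, i.e., the infimum is attained. -/
/-!
The optimal value is the infimum of the height `t` over the polyhedral set
`{((x, y), t) | (x, y) ∈ G, φ (x, y) ≤ t}` (with `x` fixed), so it suffices that a linear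
functional bounded below on a nonempty polyhedron attains its minimum. This is proved by
induction on the number of inequalities: minimize over the polyhedron with the first inequality
dropped; if a minimizer violates that inequality, walking from any feasible point towards it
shows the minimum is attained on the face where the inequality is active, which has one
inequality fewer.
-/

/-- A set is generalized polyhedral convex if it is the intersection of a closed
affine subspace with finitely many half-spaces given by continuous linear functionals. -/
def IsGPC {E : Type*} [AddCommGroup E] [Module ℝ E] [TopologicalSpace E]
    (D : Set E) : Prop :=
  ∃ (n : ℕ) (f : Fin n → E →L[ℝ] ℝ) (α : Fin n → ℝ) (L : AffineSubspace ℝ E),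
    IsClosed (L : Set E) ∧ D = {x | x ∈ L ∧ ∀ i, f i x ≤ α i}

open Set AffineMap

section Polyhedron

variable {E F : Type*} [AddCommGroup E] [Module ℝ E] [AddCommGroup F] [Module ℝ F]

def polyhedron {ι : Type*} (A : AffineSubspace ℝ E) (f : ι → E →ₗ[ℝ] ℝ) (c : ι → ℝ) : Set E :=
  {x | x ∈ A ∧ ∀ i, f i x ≤ c i}

def IsPolyhedron (D : Set E) : Prop :=
  ∃ (ι : Type) (_ : Finite ι) (A : AffineSubspace ℝ E) (f : ι → E →ₗ[ℝ] ℝ) (c : ι → ℝ),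
    D = polyhedron A f c

theorem convex_polyhedron {ι : Type*} (A : AffineSubspace ℝ E) (f : ι → E →ₗ[ℝ] ℝ)
    (c : ι → ℝ) : Convex ℝ (polyhedron A f c) := by
  have : polyhedron A f c = (A : Set E) ∩ ⋂ i, {x | f i x ≤ c i} := by
    ext x; simp [polyhedron]
  rw [this]
  exact A.convex.inter (convex_iInter fun i => convex_halfSpace_le (f i).isLinear (c i))

theorem exists_mem_forall_le_of_subset {α β : Type*} [LinearOrder β] {ℓ : α → β} {s t : Set α}
    (hst : s ⊆ t) (hs : BddBelow (ℓ '' s)) (ht : BddBelow (ℓ '' t) → ∃ z ∈ t, IsMinOn ℓ t z) :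
    ∃ z ∈ t, ∀ x ∈ s, ℓ z ≤ ℓ x := by
  by_cases hbdd : BddBelow (ℓ '' t)
  · obtain ⟨z, hzt, hz⟩ := ht hbdd
    exact ⟨z, hzt, fun x hx => hz (hst hx)⟩
  · obtain ⟨b, hb⟩ := hs
    obtain ⟨z, hzt, hzb⟩ : ∃ z ∈ t, ℓ z < b := by
      simp only [bddBelow_def, not_exists, not_forall, exists_prop, not_le] at hbdd
      simpa using hbdd b
    exact ⟨z, hzt, fun x hx => hzb.le.trans (hb ⟨x, hx, rfl⟩)⟩

theorem LinearMap.apply_lineMap_real (ℓ : E →ₗ[ℝ] ℝ) (x y : E) (t : ℝ) :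
    ℓ (lineMap x y t) = ℓ x + t * (ℓ y - ℓ x) := by
  simp only [lineMap_apply_module, map_add, map_smul, smul_eq_mul]
  ring

theorem LinearMap.apply_eq_of_bddBelow_image_affineSubspace (ℓ : E →ₗ[ℝ] ℝ)
    {A : AffineSubspace ℝ E} (hA : BddBelow (ℓ '' A)) {x y : E} (hx : x ∈ A) (hy : y ∈ A) :
    ℓ y = ℓ x := by
  obtain ⟨b, hb⟩ := hA
  have hline (t : ℝ) : b ≤ ℓ x + t * (ℓ y - ℓ x) :=
    ℓ.apply_lineMap_real x y t ▸ hb ⟨_, lineMap_mem t hx hy, rfl⟩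
  by_contra hne
  have hd : ℓ y - ℓ x ≠ 0 := sub_ne_zero.mpr hne
  have := hline ((b - ℓ x - 1) / (ℓ y - ℓ x))
  rw [div_mul_cancel₀ _ hd] at this
  linarith

theorem Convex.exists_apply_eq_of_apply_le_of_lt {s : Set E} (hs : Convex ℝ s)
    (g ℓ : E →ₗ[ℝ] ℝ) {c : ℝ} {x z : E} (hx : x ∈ s) (hz : z ∈ s) (hgx : g x ≤ c)
    (hgz : c < g z) (hℓ : ℓ z ≤ ℓ x) : ∃ w ∈ s, g w = c ∧ ℓ w ≤ ℓ x := by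
  set t := (c - g x) / (g z - g x)
  have hpos : 0 < g z - g x := by linarith
  have ht0 : 0 ≤ t := div_nonneg (by linarith) hpos.le
  have ht1 : t ≤ 1 := (div_le_one hpos).mpr (by linarith)
  refine ⟨lineMap x z t, hs.lineMap_mem hx hz ⟨ht0, ht1⟩, ?_, ?_⟩
  · rw [g.apply_lineMap_real, div_mul_cancel₀ _ hpos.ne']
    ring
  · rw [ℓ.apply_lineMap_real]
    nlinarith

theorem mem_polyhedron_succ {n : ℕ} {A : AffineSubspace ℝ E} {f : Fin (n + 1) → E →ₗ[ℝ] ℝ}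
    {c : Fin (n + 1) → ℝ} {x : E} :
    x ∈ polyhedron A f c ↔
      x ∈ polyhedron A (Fin.tail f) (Fin.tail c) ∧ f 0 x ≤ c 0 := by
  simp only [polyhedron, mem_ofPred_eq, Fin.forall_fin_succ, Fin.tail]
  tauto

theorem exists_isMinOn_polyhedron_fin (ℓ : E →ₗ[ℝ] ℝ) {n : ℕ} (A : AffineSubspace ℝ E)
    (f : Fin n → E →ₗ[ℝ] ℝ) (c : Fin n → ℝ) (hne : (polyhedron A f c).Nonempty)
    (hbdd : BddBelow (ℓ '' polyhedron A f c)) :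
    ∃ z ∈ polyhedron A f c, IsMinOn ℓ (polyhedron A f c) z := by
  induction n generalizing A with
  | zero =>
    have hA : polyhedron A f c = A := by ext; simp [polyhedron]
    rw [hA] at hne hbdd ⊢
    obtain ⟨z, hz⟩ := hne
    exact ⟨z, hz, fun x hx => (ℓ.apply_eq_of_bddBelow_image_affineSubspace hbdd hz hx).ge⟩
  | succ n ih =>
    set P := polyhedron A f c
    set P' := polyhedron A (Fin.tail f) (Fin.tail c)
    have hPP' : P ⊆ P' := fun x hx => (mem_polyhedron_succ.mp hx).1
    obtain ⟨z, hzP', hz⟩ :=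
      exists_mem_forall_le_of_subset hPP' hbdd (ih A _ _ (hne.mono hPP'))
    by_cases hz0 : f 0 z ≤ c 0
    · exact ⟨z, mem_polyhedron_succ.mpr ⟨hzP', hz0⟩, hz⟩
    set H : AffineSubspace ℝ E := (affineSpan ℝ {c 0}).comap (f 0).toAffineMap
    set Q := polyhedron (A ⊓ H) (Fin.tail f) (Fin.tail c)
    have hQP : Q ⊆ P := fun w ⟨⟨hwA, hwH⟩, hw⟩ => mem_polyhedron_succ.mpr
      ⟨⟨hwA, hw⟩, ((AffineSubspace.mem_affineSpan_singleton ℝ ℝ).mp hwH).le⟩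
    have hface : ∀ x ∈ P, ∃ w ∈ Q, ℓ w ≤ ℓ x := by
      intro x hx
      obtain ⟨w, ⟨hwA, hw⟩, hw0, hwx⟩ :=
        (convex_polyhedron _ _ _).exists_apply_eq_of_apply_le_of_lt (f 0) ℓ
          (hPP' hx) hzP' (mem_polyhedron_succ.mp hx).2 (not_le.mp hz0) (hz x hx)
      exact ⟨w, ⟨⟨hwA, (AffineSubspace.mem_affineSpan_singleton ℝ ℝ).mpr hw0⟩, hw⟩, hwx⟩
    obtain ⟨x₀, hx₀⟩ := hne
    obtain ⟨w, hwQ, hw⟩ := ih (A ⊓ H) _ _ (let ⟨w, hw, _⟩ := hface x₀ hx₀; ⟨w, hw⟩)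
      (hbdd.mono (image_mono hQP))
    refine ⟨w, hQP hwQ, fun x hx => ?_⟩
    obtain ⟨w', hw'Q, hw'x⟩ := hface x hx
    exact (hw hw'Q).trans hw'x

theorem IsPolyhedron.exists_isMinOn {D : Set E} (hD : IsPolyhedron D) (ℓ : E →ₗ[ℝ] ℝ)
    (hne : D.Nonempty) (hbdd : BddBelow (ℓ '' D)) : ∃ z ∈ D, IsMinOn ℓ D z := by
  obtain ⟨ι, _, A, f, c, rfl⟩ := hD
  obtain ⟨n, ⟨e⟩⟩ := Finite.exists_equiv_fin ι
  have hreindex : polyhedron A f c = polyhedron A (f ∘ e.symm) (c ∘ e.symm) := by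
    ext x
    simp [polyhedron, e.symm.surjective.forall]
  rw [hreindex] at hne hbdd ⊢
  exact exists_isMinOn_polyhedron_fin ℓ A _ _ hne hbdd

theorem IsPolyhedron.inter {D D' : Set E} (hD : IsPolyhedron D) (hD' : IsPolyhedron D') :
    IsPolyhedron (D ∩ D') := by
  obtain ⟨ι, _, A, f, c, rfl⟩ := hD
  obtain ⟨κ, _, A', f', c', rfl⟩ := hD'
  refine ⟨ι ⊕ κ, inferInstance, A ⊓ A', Sum.elim f f', Sum.elim c c', ?_⟩
  ext x
  simp only [polyhedron, mem_inter_iff, mem_ofPred_eq, AffineSubspace.mem_inf_iff,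
    Sum.forall, Sum.elim_inl, Sum.elim_inr]
  tauto

theorem IsPolyhedron.preimage {D : Set F} (hD : IsPolyhedron D) (g : E →ₗ[ℝ] F) :
    IsPolyhedron (g ⁻¹' D) := by
  obtain ⟨ι, _, A, f, c, rfl⟩ := hD
  exact ⟨ι, inferInstance, A.comap g.toAffineMap, fun i => f i ∘ₗ g, c, rfl⟩

theorem isPolyhedron_singleton (x : E) : IsPolyhedron {x} :=
  ⟨Empty, inferInstance, affineSpan ℝ {x}, Empty.elim, Empty.elim, by ext; simp [polyhedron]⟩

theorem IsGPC.isPolyhedron [TopologicalSpace E] {D : Set E} (hD : IsGPC D) :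
    IsPolyhedron D := by
  obtain ⟨n, f, α, L, -, rfl⟩ := hD
  exact ⟨Fin n, inferInstance, L, fun i => f i, α, rfl⟩

end Polyhedron

theorem optimal_value_attained_general
    {X Y : Type*}
    [AddCommGroup X] [Module ℝ X] [TopologicalSpace X]
    [AddCommGroup Y] [Module ℝ Y] [TopologicalSpace Y]
    (φ : X × Y → EReal) (G : Set (X × Y))
    (hepi : IsGPC {p : (X × Y) × ℝ | φ p.1 ≤ (p.2 : EReal)})
    (hG : IsGPC G) (x : X)
    (μx : EReal) (hμx : μx = sInf ((fun y => φ (x, y)) '' {y : Y | (x, y) ∈ G}))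
    (hfin : μx ≠ ⊥ ∧ μx ≠ ⊤) :
    ∃ y : Y, (x, y) ∈ G ∧ φ (x, y) = μx := by
  set S : Set ((X × Y) × ℝ) := {p | φ p.1 ≤ (p.2 : EReal)} ∩ LinearMap.fst ℝ (X × Y) ℝ ⁻¹' G ∩
    (LinearMap.fst ℝ X Y ∘ₗ LinearMap.fst ℝ (X × Y) ℝ) ⁻¹' {x}
  have hS : IsPolyhedron S :=
    (hepi.isPolyhedron.inter (hG.isPolyhedron.preimage _)).inter
      ((isPolyhedron_singleton x).preimage _)
  have mem_S {y : Y} {t : ℝ} (hy : (x, y) ∈ G) (ht : φ (x, y) ≤ t) : ((x, y), t) ∈ S :=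
    ⟨⟨ht, hy⟩, rfl⟩
  have hμ_le {y : Y} (hy : (x, y) ∈ G) : μx ≤ φ (x, y) := hμx ▸ sInf_le ⟨y, hy, rfl⟩
  lift μx to ℝ using ⟨hfin.2, hfin.1⟩ with m
  have hne : S.Nonempty := by
    obtain ⟨_, ⟨y, hy, rfl⟩, hlt⟩ :=
      sInf_lt_iff.mp (hμx ▸ EReal.coe_lt_coe_iff.mpr (lt_add_one m))
    exact ⟨_, mem_S hy hlt.le⟩
  have hbdd : BddBelow (LinearMap.snd ℝ (X × Y) ℝ '' S) := by
    refine ⟨m, ?_⟩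
    rintro _ ⟨⟨⟨x', y⟩, t⟩, ⟨⟨ht, hy⟩, rfl : x' = x⟩, rfl⟩
    exact EReal.coe_le_coe_iff.mp ((hμ_le hy).trans ht)
  obtain ⟨⟨⟨x', y⟩, t⟩, ⟨⟨ht, hy⟩, rfl : x' = x⟩, hmin⟩ := hS.exists_isMinOn _ hne hbdd
  refine ⟨y, hy, le_antisymm (ht.trans ?_) (hμ_le hy)⟩
  rw [hμx]
  refine le_sInf ?_
  rintro _ ⟨y', hy', rfl⟩
  exact EReal.le_of_forall_lt_iff_le.mp fun r hr =>
    EReal.coe_le_coe_iff.mpr (hmin (mem_S hy' hr.le))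

/-- If `φ` is a proper generalized polyhedral convex function,
`F` is a generalized polyhedral convex multifunction (with graph `G`), and the
optimal value `μ(x) = inf {φ(x,y) : y ∈ F(x)}` is finite, then the infimum is
attained. -/
theorem optimal_value_attained
    {X Y : Type*}
    [AddCommGroup X] [Module ℝ X] [TopologicalSpace X] [IsTopologicalAddGroup X]
    [ContinuousSMul ℝ X] [LocallyConvexSpace ℝ X] [T2Space X]
    [AddCommGroup Y] [Module ℝ Y] [TopologicalSpace Y] [IsTopologicalAddGroup Y]
    [ContinuousSMul ℝ Y] [LocallyConvexSpace ℝ Y] [T2Space Y]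
    (φ : X × Y → EReal) (G : Set (X × Y))
    (hepi : IsGPC {p : (X × Y) × ℝ | φ p.1 ≤ (p.2 : EReal)})
    (hproper : (∀ p, φ p ≠ ⊥) ∧ (∃ p, φ p ≠ ⊤))
    (hG : IsGPC G) (x : X)
    (μx : EReal) (hμx : μx = sInf ((fun y => φ (x, y)) '' {y : Y | (x, y) ∈ G}))
    (hfin : μx ≠ ⊥ ∧ μx ≠ ⊤) :
    ∃ y : Y, (x, y) ∈ G ∧ φ (x, y) = μx :=
  optimal_value_attained_general φ G hepi hG x μx hμx hfin
end
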